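/- Let A be a complex unital Banach algebra and let a ∈ A have a Moore-Penrose inverse a†. Then the following statements are equivalent: (i) a is EP; (ii) there exist b₁, c₁, d₁, f₁, g₁ ∈ A such that a = b₁c₁g₁, a† = f₁d₁g₁, c₁⁻¹(0) = d₁⁻¹(0), and b₁⁻¹(0) = f₁⁻¹(0) = 0; (iii) there exist h₁, k₁, l₁, m₁, n₁ ∈ A such that a = h₁k₁l₁, a† = h₁m₁n₁, l₁A = A = n₁A, and k₁A = m₁A; (iv) there exist b₂, c₂, d₂, g₂, g₃ ∈ A such that a = b₂c₂g₂, a† = b₂d₂g₃, (c₂)₋₁(0) = (d₂)₋₁(0), and (g₂)₋₁(0) = (g₃)₋₁(0) = 0; (v) there exist h₂, h₃, k₂, l₂, m₂ ∈ A such that a = h₂k₂l₂, a† = h₃m₂l₂, Ak₂ = Am₂, and Ah₂ = Ah₃ = A. -/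

import Mathlib

/-!
Write `p = a a†` and `q = a† a`; both are hermitian idempotents. Each factorization in the
list makes the kernels (or the ranges) of `a` and `a†`, on the same side, coincide, and this
gives `pq = p, qp = q` (or `pq = q, qp = p`). Then `n = ±2(p - q)` squares to zero and
`(1 - 2p)(1 - 2q) = 1 + n`, where `1 - 2p = exp (iπ p)` has norm one. Hence
`‖1 + k n‖ = ‖(1 + n)^k‖ ≤ 1` for every `k`, which forces `n = 0`, that is `p = q`.
Conversely, an EP element has these factorizations with the outer factors equal to `1`.
-/

noncomputable section

/-- An element `h` of a complex normed algebra is *hermitian* if `‖exp (i t h)‖ = 1`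
for all real `t`. -/
def IsHermitianElem {A : Type*} [NormedRing A] [NormedAlgebra ℂ A] (h : A) : Prop :=
  ∀ t : ℝ, ‖NormedSpace.exp ((Complex.I * (t : ℂ)) • h)‖ = 1

/-- `x` is a Moore–Penrose inverse of `a`: `axa = a`, `xax = x`, and `ax`, `xa` are hermitian. -/
def IsMPInv {A : Type*} [NormedRing A] [NormedAlgebra ℂ A] (a x : A) : Prop :=
  a * x * a = a ∧ x * a * x = x ∧ IsHermitianElem (a * x) ∧ IsHermitianElem (x * a)

open NormedSpace Nat

theorem eq_zero_of_mul_self_eq_zero_of_norm_one_add_le {A : Type*} [NormedRing A]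
    [NormedSpace ℝ A] {n : A} (hn : n * n = 0) (h : ‖1 + n‖ ≤ 1) : n = 0 := by
  have hpow : ∀ k : ℕ, (1 + n) ^ k = 1 + k • n := by
    intro k
    induction k with
    | zero => simp
    | succ k ih => rw [pow_succ, ih, add_mul, one_mul, smul_mul_assoc, mul_add, mul_one, hn,
        add_zero, succ_nsmul]; abel
  have hbound : ∀ k : ℕ, (k + 1) * ‖n‖ ≤ 1 + ‖(1 : A)‖ := fun k => calc
    (k + 1) * ‖n‖ = ‖(1 + n) ^ (k + 1) - 1‖ := by
      rw [hpow, add_sub_cancel_left, RCLike.norm_nsmul ℝ, nsmul_eq_mul]; push_cast; ring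
    _ ≤ ‖(1 + n) ^ (k + 1)‖ + ‖(1 : A)‖ := norm_sub_le _ _
    _ ≤ 1 + ‖(1 : A)‖ := by
      gcongr
      exact (norm_pow_le' _ k.succ_pos).trans (pow_le_one₀ (norm_nonneg _) h)
  by_contra hne
  obtain ⟨k, hk⟩ := exists_nat_gt ((1 + ‖(1 : A)‖) / ‖n‖)
  rw [div_lt_iff₀ (norm_pos_iff.mpr hne)] at hk
  linarith [hbound k, norm_nonneg n]

section Hermitian

variable {A : Type*} [NormedRing A] [NormedAlgebra ℂ A]

theorem exp_smul_of_isIdempotentElem {p : A} (hp : IsIdempotentElem p) (c : ℂ) :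
    exp (c • p) = 1 + (Complex.exp c - 1) • p := by
  have hexp : HasSum (fun k : ℕ => ((k ! : ℂ)⁻¹ * c ^ k) • p) (Complex.exp c • p) := by
    have := expSeries_div_hasSum_exp c
    rw [← Complex.exp_eq_exp_ℂ] at this
    simpa [div_eq_inv_mul] using this.smul_const p
  have hsum : HasSum (fun k : ℕ => (k ! : ℂ)⁻¹ • (c • p) ^ k) (1 + (Complex.exp c - 1) • p) := by
    convert hexp.add (hasSum_ite_eq 0 (1 - p)) using 1
    · funext k
      rcases k with _ | k
      · simp
      · rw [smul_pow, hp.pow_succ_eq, smul_smul]; simp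
    · module
  rw [exp_eq_tsum ℂ]
  exact hsum.tsum_eq

theorem IsHermitianElem.norm_one_sub_two_smul {p : A} (hh : IsHermitianElem p)
    (hp : IsIdempotentElem p) : ‖1 - (2 : ℂ) • p‖ = 1 := by
  have hπ : Complex.exp (Complex.I * Real.pi) - 1 = -2 := by
    rw [mul_comm, Complex.exp_pi_mul_I]; norm_num
  simpa [exp_smul_of_isIdempotentElem hp, hπ, neg_smul, ← sub_eq_add_neg] using hh Real.pi

theorem IsHermitianElem.norm_one_sub_two_smul_mul_le {p q : A} (hhp : IsHermitianElem p)
    (hhq : IsHermitianElem q) (hp : IsIdempotentElem p) (hq : IsIdempotentElem q) :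
    ‖(1 - (2 : ℂ) • p) * (1 - (2 : ℂ) • q)‖ ≤ 1 :=
  (norm_mul_le _ _).trans <| by
    rw [hhp.norm_one_sub_two_smul hp, hhq.norm_one_sub_two_smul hq, one_mul]

theorem IsHermitianElem.eq_of_mul_eq_left {p q : A} (hhp : IsHermitianElem p)
    (hhq : IsHermitianElem q) (hp : IsIdempotentElem p) (hq : IsIdempotentElem q)
    (hpq : p * q = p) (hqp : q * p = q) : p = q := by
  have hsq : (2 : ℂ) • (p - q) * ((2 : ℂ) • (p - q)) = 0 := by
    simp only [smul_mul_smul_comm, sub_mul, mul_sub, hp.eq, hq.eq, hpq, hqp]; abel_nf; simp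
  have hprod : (1 - (2 : ℂ) • p) * (1 - (2 : ℂ) • q) = 1 + (2 : ℂ) • (p - q) := by
    simp only [sub_mul, mul_sub, one_mul, mul_one, smul_mul_smul_comm, hpq]; module
  have := eq_zero_of_mul_self_eq_zero_of_norm_one_add_le hsq
    (hprod ▸ hhp.norm_one_sub_two_smul_mul_le hhq hp hq)
  simpa [sub_eq_zero] using this

theorem IsHermitianElem.eq_of_mul_eq_right {p q : A} (hhp : IsHermitianElem p)
    (hhq : IsHermitianElem q) (hp : IsIdempotentElem p) (hq : IsIdempotentElem q)
    (hpq : p * q = q) (hqp : q * p = p) : p = q := by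
  have hsq : (2 : ℂ) • (q - p) * ((2 : ℂ) • (q - p)) = 0 := by
    simp only [smul_mul_smul_comm, sub_mul, mul_sub, hp.eq, hq.eq, hpq, hqp]; abel_nf; simp
  have hprod : (1 - (2 : ℂ) • p) * (1 - (2 : ℂ) • q) = 1 + (2 : ℂ) • (q - p) := by
    simp only [sub_mul, mul_sub, one_mul, mul_one, smul_mul_smul_comm, hpq]; module
  have := eq_zero_of_mul_self_eq_zero_of_norm_one_add_le hsq
    (hprod ▸ hhp.norm_one_sub_two_smul_mul_le hhq hp hq)
  exact (by simpa [sub_eq_zero] using this : q = p).symm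

end Hermitian

section OuterInverse

theorem mul_self_mul_eq_of_ker_mulLeft_subset {R : Type*} [Ring R] {a b : R}
    (h : b * a * b = b) (hker : ∀ x, b * x = 0 → a * x = 0) : a * a * b = a := by
  have := hker (1 - a * b) (by rw [mul_sub, mul_one, ← mul_assoc, h, sub_self])
  rw [mul_sub, mul_one, sub_eq_zero, ← mul_assoc] at this
  exact this.symm

theorem mul_mul_self_eq_of_ker_mulRight_subset {R : Type*} [Ring R] {a b : R}
    (h : b * a * b = b) (hker : ∀ x, x * b = 0 → x * a = 0) : b * a * a = a := by
  have := hker (1 - b * a) (by rw [sub_mul, one_mul, h, sub_self])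
  rw [sub_mul, one_mul, sub_eq_zero] at this
  exact this.symm

theorem mul_mul_self_eq_of_mem_range_mulLeft {S : Type*} [Semigroup S] {a b : S}
    (h : b * a * b = b) (ha : ∃ y, a = b * y) : b * a * a = a := by
  obtain ⟨y, rfl⟩ := ha
  rw [← mul_assoc, h]

theorem mul_self_mul_eq_of_mem_range_mulRight {S : Type*} [Semigroup S] {a b : S}
    (h : b * a * b = b) (ha : ∃ y, a = y * b) : a * a * b = a := by
  obtain ⟨y, rfl⟩ := ha
  simp only [mul_assoc] at h ⊢
  rw [h]

end OuterInverse

section Commute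

variable {S : Type*} {a b : S}

theorem ker_mulLeft_eq_of_commute [SemigroupWithZero S] (h₁ : a * b * a = a)
    (h₂ : b * a * b = b) (hc : a * b = b * a) : {x | a * x = 0} = {x | b * x = 0} := by
  have key : ∀ {a b : S}, b * a * b = b → a * b = b * a → ∀ x, a * x = 0 → b * x = 0 := by
    intro a b h hc x hx
    calc b * x = b * (a * b) * x := by rw [← mul_assoc, h]
      _ = b * b * (a * x) := by rw [hc]; simp only [mul_assoc]
      _ = 0 := by rw [hx, mul_zero]
  ext x
  exact ⟨key h₂ hc x, key h₁ hc.symm x⟩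

theorem ker_mulRight_eq_of_commute [SemigroupWithZero S] (h₁ : a * b * a = a)
    (h₂ : b * a * b = b) (hc : a * b = b * a) : {x | x * a = 0} = {x | x * b = 0} := by
  have key : ∀ {a b : S}, b * a * b = b → a * b = b * a → ∀ x, x * a = 0 → x * b = 0 := by
    intro a b h hc x hx
    calc x * b = x * (b * a) * b := by rw [mul_assoc x, h]
      _ = x * a * (b * b) := by rw [← hc]; simp only [mul_assoc]
      _ = 0 := by rw [hx, zero_mul]
  ext x
  exact ⟨key h₂ hc x, key h₁ hc.symm x⟩

theorem range_mulLeft_eq_of_commute [Semigroup S] (h₁ : a * b * a = a)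
    (h₂ : b * a * b = b) (hc : a * b = b * a) :
    {y | ∃ x, y = a * x} = {y | ∃ x, y = b * x} := by
  have key : ∀ {a b : S}, a * b * a = a → a * b = b * a →
      {y | ∃ x, y = a * x} ⊆ {y | ∃ x, y = b * x} := by
    rintro a b h hc _ ⟨x, rfl⟩
    refine ⟨a * (a * x), ?_⟩
    calc a * x = a * b * a * x := by rw [h]
      _ = b * (a * (a * x)) := by rw [hc]; simp only [mul_assoc]
  exact (key h₁ hc).antisymm (key h₂ hc.symm)

theorem range_mulRight_eq_of_commute [Semigroup S] (h₁ : a * b * a = a)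
    (h₂ : b * a * b = b) (hc : a * b = b * a) :
    {y | ∃ x, y = x * a} = {y | ∃ x, y = x * b} := by
  have key : ∀ {a b : S}, a * b * a = a → a * b = b * a →
      {y | ∃ x, y = x * a} ⊆ {y | ∃ x, y = x * b} := by
    rintro a b h hc _ ⟨x, rfl⟩
    refine ⟨x * a * a, ?_⟩
    calc x * a = x * (a * b * a) := by rw [h]
      _ = x * a * a * b := by rw [mul_assoc a b a, ← hc]; simp only [mul_assoc]
  exact (key h₁ hc).antisymm (key h₂ hc.symm)

end Commute

section Factorization

variable {S : Type*}

theorem ker_mulLeft_subset_of_factor [SemigroupWithZero S] {a a' b c d f g : S}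
    (ha : a = b * c * g) (ha' : a' = f * d * g) (hcd : {x | c * x = 0} ⊆ {x | d * x = 0})
    (hb : {x | b * x = 0} ⊆ {0}) : {x | a * x = 0} ⊆ {x | a' * x = 0} := by
  intro x hx
  have hc : c * (g * x) = 0 := hb (by simpa only [Set.mem_ofPred_eq, ha, mul_assoc] using hx)
  show a' * x = 0
  rw [ha', mul_assoc, mul_assoc, hcd hc, mul_zero]

theorem ker_mulLeft_eq_of_factor [SemigroupWithZero S] {a a' b c d f g : S}
    (ha : a = b * c * g) (ha' : a' = f * d * g) (hcd : {x | c * x = 0} = {x | d * x = 0})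
    (hb : {x | b * x = 0} = {0}) (hf : {x | f * x = 0} = {0}) :
    {x | a * x = 0} = {x | a' * x = 0} :=
  (ker_mulLeft_subset_of_factor ha ha' hcd.le hb.le).antisymm
    (ker_mulLeft_subset_of_factor ha' ha hcd.ge hf.le)

theorem ker_mulRight_subset_of_factor [SemigroupWithZero S] {a a' b c d g g' : S}
    (ha : a = b * c * g) (ha' : a' = b * d * g') (hcd : {x | x * c = 0} ⊆ {x | x * d = 0})
    (hg : {x | x * g = 0} ⊆ {0}) : {x | x * a = 0} ⊆ {x | x * a' = 0} := by
  intro x hx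
  have hc : x * b * c = 0 := hg (by simpa only [Set.mem_ofPred_eq, ha, mul_assoc] using hx)
  show x * a' = 0
  rw [ha', ← mul_assoc, ← mul_assoc, hcd hc, zero_mul]

theorem ker_mulRight_eq_of_factor [SemigroupWithZero S] {a a' b c d g g' : S}
    (ha : a = b * c * g) (ha' : a' = b * d * g') (hcd : {x | x * c = 0} = {x | x * d = 0})
    (hg : {x | x * g = 0} = {0}) (hg' : {x | x * g' = 0} = {0}) :
    {x | x * a = 0} = {x | x * a' = 0} :=
  (ker_mulRight_subset_of_factor ha ha' hcd.le hg.le).antisymm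
    (ker_mulRight_subset_of_factor ha' ha hcd.ge hg'.le)

theorem range_mulLeft_subset_of_factor [Semigroup S] {a a' h k l m n : S}
    (ha : a = h * k * l) (ha' : a' = h * m * n) (hn : {y | ∃ x, y = n * x} = Set.univ)
    (hkm : {y | ∃ x, y = k * x} ⊆ {y | ∃ x, y = m * x}) :
    {y | ∃ x, y = a * x} ⊆ {y | ∃ x, y = a' * x} := by
  rintro _ ⟨x, rfl⟩
  obtain ⟨z, hz⟩ := hkm ⟨l * x, rfl⟩
  obtain ⟨w, rfl⟩ := Set.eq_univ_iff_forall.mp hn z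
  exact ⟨w, by simp only [ha, ha', mul_assoc, hz]⟩

theorem range_mulLeft_eq_of_factor [Semigroup S] {a a' h k l m n : S}
    (ha : a = h * k * l) (ha' : a' = h * m * n) (hl : {y | ∃ x, y = l * x} = Set.univ)
    (hn : {y | ∃ x, y = n * x} = Set.univ)
    (hkm : {y | ∃ x, y = k * x} = {y | ∃ x, y = m * x}) :
    {y | ∃ x, y = a * x} = {y | ∃ x, y = a' * x} :=
  (range_mulLeft_subset_of_factor ha ha' hn hkm.le).antisymm
    (range_mulLeft_subset_of_factor ha' ha hl hkm.ge)

theorem range_mulRight_subset_of_factor [Semigroup S] {a a' h h' k l m : S}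
    (ha : a = h * k * l) (ha' : a' = h' * m * l)
    (hkm : {y | ∃ x, y = x * k} ⊆ {y | ∃ x, y = x * m})
    (hh' : {y | ∃ x, y = x * h'} = Set.univ) :
    {y | ∃ x, y = x * a} ⊆ {y | ∃ x, y = x * a'} := by
  rintro _ ⟨x, rfl⟩
  obtain ⟨z, hz⟩ := hkm ⟨x * h, rfl⟩
  obtain ⟨w, rfl⟩ := Set.eq_univ_iff_forall.mp hh' z
  exact ⟨w, by simp only [ha, ha', ← mul_assoc, hz]⟩

theorem range_mulRight_eq_of_factor [Semigroup S] {a a' h h' k l m : S}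
    (ha : a = h * k * l) (ha' : a' = h' * m * l)
    (hkm : {y | ∃ x, y = x * k} = {y | ∃ x, y = x * m})
    (hh : {y | ∃ x, y = x * h} = Set.univ) (hh' : {y | ∃ x, y = x * h'} = Set.univ) :
    {y | ∃ x, y = x * a} = {y | ∃ x, y = x * a'} :=
  (range_mulRight_subset_of_factor ha ha' hkm.le hh').antisymm
    (range_mulRight_subset_of_factor ha' ha hkm.ge hh)

end Factorization

namespace IsMPInv

variable {A : Type*} [NormedRing A] [NormedAlgebra ℂ A] {a ad : A}

theorem isIdempotentElem_mul_left (h : IsMPInv a ad) : IsIdempotentElem (a * ad) := by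
  rw [IsIdempotentElem, ← mul_assoc, h.1]

theorem isIdempotentElem_mul_right (h : IsMPInv a ad) : IsIdempotentElem (ad * a) := by
  rw [IsIdempotentElem, ← mul_assoc, h.2.1]

theorem commute_of_mul_self_mul_eq (h : IsMPInv a ad) (ha : a * a * ad = a)
    (had : ad * ad * a = ad) : a * ad = ad * a := by
  refine h.2.2.1.eq_of_mul_eq_left h.2.2.2 h.isIdempotentElem_mul_left
    h.isIdempotentElem_mul_right ?_ ?_
  · calc a * ad * (ad * a) = a * (ad * ad * a) := by simp only [mul_assoc]
      _ = a * ad := by rw [had]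
  · calc ad * a * (a * ad) = ad * (a * a * ad) := by simp only [mul_assoc]
      _ = ad * a := by rw [ha]

theorem commute_of_mul_mul_self_eq (h : IsMPInv a ad) (ha : ad * a * a = a)
    (had : a * ad * ad = ad) : a * ad = ad * a := by
  refine h.2.2.1.eq_of_mul_eq_right h.2.2.2 h.isIdempotentElem_mul_left
    h.isIdempotentElem_mul_right ?_ ?_
  · calc a * ad * (ad * a) = a * ad * ad * a := by simp only [mul_assoc]
      _ = ad * a := by rw [had]
  · calc ad * a * (a * ad) = ad * a * a * ad := by simp only [mul_assoc]
      _ = a * ad := by rw [ha]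

theorem commute_of_ker_mulLeft_eq (h : IsMPInv a ad)
    (hker : {x | a * x = 0} = {x | ad * x = 0}) : a * ad = ad * a :=
  h.commute_of_mul_self_mul_eq
    (mul_self_mul_eq_of_ker_mulLeft_subset h.2.1 fun x => (Set.ext_iff.mp hker x).2)
    (mul_self_mul_eq_of_ker_mulLeft_subset h.1 fun x => (Set.ext_iff.mp hker x).1)

theorem commute_of_range_mulLeft_eq (h : IsMPInv a ad)
    (hrange : {y | ∃ x, y = a * x} = {y | ∃ x, y = ad * x}) : a * ad = ad * a :=
  h.commute_of_mul_mul_self_eq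
    (mul_mul_self_eq_of_mem_range_mulLeft h.2.1
      ((Set.ext_iff.mp hrange a).1 ⟨1, (mul_one a).symm⟩))
    (mul_mul_self_eq_of_mem_range_mulLeft h.1
      ((Set.ext_iff.mp hrange ad).2 ⟨1, (mul_one ad).symm⟩))

theorem commute_of_ker_mulRight_eq (h : IsMPInv a ad)
    (hker : {x | x * a = 0} = {x | x * ad = 0}) : a * ad = ad * a :=
  h.commute_of_mul_mul_self_eq
    (mul_mul_self_eq_of_ker_mulRight_subset h.2.1 fun x => (Set.ext_iff.mp hker x).2)
    (mul_mul_self_eq_of_ker_mulRight_subset h.1 fun x => (Set.ext_iff.mp hker x).1)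

theorem commute_of_range_mulRight_eq (h : IsMPInv a ad)
    (hrange : {y | ∃ x, y = x * a} = {y | ∃ x, y = x * ad}) : a * ad = ad * a :=
  h.commute_of_mul_self_mul_eq
    (mul_self_mul_eq_of_mem_range_mulRight h.2.1
      ((Set.ext_iff.mp hrange a).1 ⟨1, (one_mul a).symm⟩))
    (mul_self_mul_eq_of_mem_range_mulRight h.1
      ((Set.ext_iff.mp hrange ad).2 ⟨1, (one_mul ad).symm⟩))

end IsMPInv

theorem ep_tfae_three_factor_general {A : Type*} [NormedRing A] [NormedAlgebra ℂ A]
    (a ad : A) (had : IsMPInv a ad) :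
    List.TFAE
      [a * ad = ad * a,
       ∃ b₁ c₁ d₁ f₁ g₁ : A, a = b₁ * c₁ * g₁ ∧ ad = f₁ * d₁ * g₁ ∧
         {x : A | c₁ * x = 0} = {x : A | d₁ * x = 0} ∧
         {x : A | b₁ * x = 0} = {0} ∧ {x : A | f₁ * x = 0} = {0},
       ∃ h₁ k₁ l₁ m₁ n₁ : A, a = h₁ * k₁ * l₁ ∧ ad = h₁ * m₁ * n₁ ∧
         {y : A | ∃ x, y = l₁ * x} = Set.univ ∧ {y : A | ∃ x, y = n₁ * x} = Set.univ ∧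
         {y : A | ∃ x, y = k₁ * x} = {y : A | ∃ x, y = m₁ * x},
       ∃ b₂ c₂ d₂ g₂ g₃ : A, a = b₂ * c₂ * g₂ ∧ ad = b₂ * d₂ * g₃ ∧
         {x : A | x * c₂ = 0} = {x : A | x * d₂ = 0} ∧
         {x : A | x * g₂ = 0} = {0} ∧ {x : A | x * g₃ = 0} = {0},
       ∃ h₂ h₃ k₂ l₂ m₂ : A, a = h₂ * k₂ * l₂ ∧ ad = h₃ * m₂ * l₂ ∧
         {y : A | ∃ x, y = x * k₂} = {y : A | ∃ x, y = x * m₂} ∧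
         {y : A | ∃ x, y = x * h₂} = Set.univ ∧ {y : A | ∃ x, y = x * h₃} = Set.univ] := by
  tfae_have 1 → 2 := fun hc =>
    ⟨1, a, ad, 1, 1, by simp, by simp, ker_mulLeft_eq_of_commute had.1 had.2.1 hc, by simp,
      by simp⟩
  tfae_have 2 → 1 := fun ⟨_, _, _, _, _, ha, had', hcd, hb, hf⟩ =>
    had.commute_of_ker_mulLeft_eq (ker_mulLeft_eq_of_factor ha had' hcd hb hf)
  tfae_have 1 → 3 := fun hc =>
    ⟨1, a, 1, ad, 1, by simp, by simp, by simp, by simp,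
      range_mulLeft_eq_of_commute had.1 had.2.1 hc⟩
  tfae_have 3 → 1 := fun ⟨_, _, _, _, _, ha, had', hl, hn, hkm⟩ =>
    had.commute_of_range_mulLeft_eq (range_mulLeft_eq_of_factor ha had' hl hn hkm)
  tfae_have 1 → 4 := fun hc =>
    ⟨1, a, ad, 1, 1, by simp, by simp, ker_mulRight_eq_of_commute had.1 had.2.1 hc, by simp,
      by simp⟩
  tfae_have 4 → 1 := fun ⟨_, _, _, _, _, ha, had', hcd, hg, hg'⟩ =>
    had.commute_of_ker_mulRight_eq (ker_mulRight_eq_of_factor ha had' hcd hg hg')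
  tfae_have 1 → 5 := fun hc =>
    ⟨1, 1, a, 1, ad, by simp, by simp, range_mulRight_eq_of_commute had.1 had.2.1 hc, by simp,
      by simp⟩
  tfae_have 5 → 1 := fun ⟨_, _, _, _, _, ha, had', hkm, hh, hh'⟩ =>
    had.commute_of_range_mulRight_eq (range_mulRight_eq_of_factor ha had' hkm hh hh')
  tfae_finish

/-- For `a` with Moore–Penrose inverse `a†` in a Banach algebra: `a` is EP iff it admits
any of the four displayed factorizations `a = ucv`, `a† = u'c'v'`. -/
theorem ep_tfae_three_factor {A : Type*} [NormedRing A] [NormedAlgebra ℂ A] [CompleteSpace A]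
    (a ad : A) (had : IsMPInv a ad) :
    List.TFAE
      [a * ad = ad * a,
       ∃ b₁ c₁ d₁ f₁ g₁ : A, a = b₁ * c₁ * g₁ ∧ ad = f₁ * d₁ * g₁ ∧
         {x : A | c₁ * x = 0} = {x : A | d₁ * x = 0} ∧
         {x : A | b₁ * x = 0} = {0} ∧ {x : A | f₁ * x = 0} = {0},
       ∃ h₁ k₁ l₁ m₁ n₁ : A, a = h₁ * k₁ * l₁ ∧ ad = h₁ * m₁ * n₁ ∧
         {y : A | ∃ x, y = l₁ * x} = Set.univ ∧ {y : A | ∃ x, y = n₁ * x} = Set.univ ∧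
         {y : A | ∃ x, y = k₁ * x} = {y : A | ∃ x, y = m₁ * x},
       ∃ b₂ c₂ d₂ g₂ g₃ : A, a = b₂ * c₂ * g₂ ∧ ad = b₂ * d₂ * g₃ ∧
         {x : A | x * c₂ = 0} = {x : A | x * d₂ = 0} ∧
         {x : A | x * g₂ = 0} = {0} ∧ {x : A | x * g₃ = 0} = {0},
       ∃ h₂ h₃ k₂ l₂ m₂ : A, a = h₂ * k₂ * l₂ ∧ ad = h₃ * m₂ * l₂ ∧
         {y : A | ∃ x, y = x * k₂} = {y : A | ∃ x, y = x * m₂} ∧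
         {y : A | ∃ x, y = x * h₂} = Set.univ ∧ {y : A | ∃ x, y = x * h₃} = Set.univ] :=
  ep_tfae_three_factor_general a ad had
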